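/- arXiv:math/9310227 — 7 statements merged into one kernel-verified Lean document; each statement's English description precedes it below -/
import Mathlib

section
/- Let D be an additive subgroup (linear code) of (Z/4Z)ⁿ. The binary image φ(D) ⊆ (Z/2Z)^{2n} is an additive subgroup (i.e., a linear binary code) if and only if for all a, b ∈ D, the vector 2·(α(a) ∗ α(b)) (componentwise product of the mod-2 reductions, lifted and multiplied by 2) belongs to D. -/
def alphaZ4 (i : ZMod 4) : ZMod 2 := (i.val : ZMod 2)
def betaZ4 (i : ZMod 4) : ZMod 2 := ((i.val / 2 : ℕ) : ZMod 2)
def gammaZ4 (i : ZMod 4) : ZMod 2 := betaZ4 i + alphaZ4 i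

def grayMap {n : ℕ} (a : Fin n → ZMod 4) : (Fin n ⊕ Fin n) → ZMod 2 :=
  Sum.elim (fun i => betaZ4 (a i)) (fun i => gammaZ4 (a i))

/-- The vector `2 (α(a) ∗ α(b))`, whose `i`-th coordinate is `2` if
`α(aᵢ) α(bᵢ) = 1` and `0` otherwise. -/
def twoAlphaStar {n : ℕ} (a b : Fin n → ZMod 4) : Fin n → ZMod 4 :=
  fun i => if alphaZ4 (a i) * alphaZ4 (b i) = 1 then 2 else 0

lemma key_beta (x y : ZMod 4) :
    betaZ4 (x + y + (if alphaZ4 x * alphaZ4 y = 1 then 2 else 0)) = betaZ4 x + betaZ4 y := by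
  revert x y; decide

lemma key_gamma (x y : ZMod 4) :
    gammaZ4 (x + y + (if alphaZ4 x * alphaZ4 y = 1 then 2 else 0)) = gammaZ4 x + gammaZ4 y := by
  revert x y; decide

lemma key_inj (x y : ZMod 4) (h1 : betaZ4 x = betaZ4 y) (h2 : gammaZ4 x = gammaZ4 y) : x = y := by
  revert h1 h2; revert x y; decide

lemma grayMap_add {n : ℕ} (a b : Fin n → ZMod 4) :
    grayMap (a + b + twoAlphaStar a b) = grayMap a + grayMap b := by
  funext i
  cases i with
  | inl i => exact key_beta (a i) (b i)
  | inr i => exact key_gamma (a i) (b i)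

lemma grayMap_injective {n : ℕ} : Function.Injective (grayMap (n := n)) := by
  intro a b h
  funext i
  exact key_inj _ _ (congrFun h (Sum.inl i)) (congrFun h (Sum.inr i))

lemma grayMap_zero {n : ℕ} : grayMap (n := n) 0 = 0 := by
  funext i
  cases i with
  | inl i => show betaZ4 0 = 0; decide
  | inr i => show gammaZ4 0 = 0; decide

theorem grayImage_linear_iff {n : ℕ} (D : AddSubgroup (Fin n → ZMod 4)) :
    (∃ S : AddSubgroup ((Fin n ⊕ Fin n) → ZMod 2),
        (S : Set ((Fin n ⊕ Fin n) → ZMod 2)) = grayMap '' (D : Set (Fin n → ZMod 4))) ↔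
    (∀ a ∈ D, ∀ b ∈ D, twoAlphaStar a b ∈ D) := by
  constructor
  · rintro ⟨S, hS⟩ a ha b hb
    have hga : grayMap a ∈ S := by rw [← SetLike.mem_coe, hS]; exact ⟨a, ha, rfl⟩
    have hgb : grayMap b ∈ S := by rw [← SetLike.mem_coe, hS]; exact ⟨b, hb, rfl⟩
    have hsum : grayMap a + grayMap b ∈ S := S.add_mem hga hgb
    rw [← SetLike.mem_coe, hS] at hsum
    obtain ⟨c, hc, hce⟩ := hsum
    rw [← grayMap_add] at hce
    have : a + b + twoAlphaStar a b = c := grayMap_injective hce.symm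
    have : twoAlphaStar a b = c - a - b := by
      rw [← this]; abel
    rw [this]
    exact D.sub_mem (D.sub_mem hc ha) hb
  · intro h
    refine ⟨{
      carrier := grayMap '' (D : Set (Fin n → ZMod 4))
      zero_mem' := ⟨0, D.zero_mem, grayMap_zero⟩
      add_mem' := ?_
      neg_mem' := ?_ }, rfl⟩
    · rintro x y ⟨a, ha, rfl⟩ ⟨b, hb, rfl⟩
      exact ⟨a + b + twoAlphaStar a b,
        D.add_mem (D.add_mem ha hb) (h a ha b hb), grayMap_add a b⟩
    · rintro x ⟨a, ha, rfl⟩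
      have : -grayMap a = grayMap a := by
        funext i
        exact CharTwo.neg_eq _
      rw [this]; exact ⟨a, ha, rfl⟩
end

section
/- The first-order Reed-Muller code RM(1, m) of length 2^m (for m ≥ 1) is Z4-linear: there exists a permutation of its coordinates and a linear code D over Z/4Z of length 2^{m-1} such that the permuted code equals φ(D). -/
def RM (r m : ℕ) : Submodule (ZMod 2) ((Fin m → ZMod 2) → ZMod 2) :=
  Submodule.span (ZMod 2)
    { v | ∃ S : Finset (Fin m), S.card ≤ r ∧ v = fun x => ∏ j ∈ S, x j }

def IsZ4Linear {ι : Type} (C : Set (ι → ZMod 2)) (n : ℕ) : Prop :=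
  ∃ e : ι ≃ (Fin n ⊕ Fin n), ∃ D : AddSubgroup (Fin n → ZMod 4),
    (fun c => c ∘ e.symm) '' C = grayMap '' (D : Set (Fin n → ZMod 4))

-- auxiliary

def liftZ2 (s : ZMod 2) : ZMod 4 := (2 * s.val : ℕ)

lemma liftZ2_add : ∀ s t : ZMod 2, liftZ2 (s + t) = liftZ2 s + liftZ2 t := by decide
lemma liftZ2_zero : liftZ2 0 = 0 := by decide
lemma neg_liftZ2 : ∀ s : ZMod 2, -liftZ2 s = liftZ2 s := by decide
lemma beta_lift : ∀ (l : ZMod 4) (s : ZMod 2), betaZ4 (l + liftZ2 s) = betaZ4 l + s := by decide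
lemma gamma_lift : ∀ (l : ZMod 4) (s : ZMod 2), gammaZ4 (l + liftZ2 s) = gammaZ4 l + s := by decide
lemma exists_lam : ∀ (d ε : ZMod 2), ∃ l : ZMod 4, betaZ4 l = d ∧ gammaZ4 l = d + ε := by decide
lemma zmod2_cases : ∀ a : ZMod 2, a = 0 ∨ a = 1 := by decide

def affSub (m : ℕ) : Submodule (ZMod 2) ((Fin m → ZMod 2) → ZMod 2) where
  carrier := {f | ∃ (d : ZMod 2) (c : Fin m → ZMod 2), f = fun x => d + ∑ j, c j * x j}
  zero_mem' := ⟨0, 0, by funext x; simp⟩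
  add_mem' := by
    rintro f g ⟨d, c, rfl⟩ ⟨d', c', rfl⟩
    refine ⟨d + d', c + c', ?_⟩
    funext x
    simp [Finset.sum_add_distrib, add_mul]
    ring
  smul_mem' := by
    rintro r f ⟨d, c, rfl⟩
    refine ⟨r * d, r • c, ?_⟩
    funext x
    simp [Finset.mul_sum, mul_add, mul_assoc]

lemma mem_affSub {m : ℕ} {f} : f ∈ affSub m ↔ ∃ (d : ZMod 2) (c : Fin m → ZMod 2), f = fun x => d + ∑ j, c j * x j := Iff.rfl

lemma rm1_eq (m : ℕ) : RM 1 m = affSub m := by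
  apply le_antisymm
  · rw [RM, Submodule.span_le]
    rintro v ⟨S, hS, rfl⟩
    rcases Nat.le_one_iff_eq_zero_or_eq_one.mp hS with h | h
    · obtain rfl := Finset.card_eq_zero.mp h
      exact ⟨1, 0, by funext x; simp⟩
    · obtain ⟨j, rfl⟩ := Finset.card_eq_one.mp h
      refine ⟨0, fun k => if k = j then 1 else 0, ?_⟩
      funext x
      simp [ite_mul, Finset.sum_ite_eq']
  · rintro f ⟨d, c, rfl⟩
    have h1 : (fun _ : Fin m → ZMod 2 => (1:ZMod 2)) ∈ RM 1 m :=
      Submodule.subset_span ⟨∅, by simp, by simp⟩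
    have h2 : ∀ j, (fun x : Fin m → ZMod 2 => x j) ∈ RM 1 m := fun j =>
      Submodule.subset_span ⟨{j}, by simp, by simp⟩
    have hmem := Submodule.add_mem _ (Submodule.smul_mem _ d h1)
      (Submodule.sum_mem (RM 1 m) (fun j (_ : j ∈ Finset.univ) => Submodule.smul_mem _ (c j) (h2 j)))
    convert hmem using 1
    funext x
    simp [Finset.sum_apply]

noncomputable def encF (m' : ℕ) : (Fin m' → ZMod 2) ≃ Fin (2 ^ m') :=
  Fintype.equivFinOfCardEq (by simp)

noncomputable def eEquiv (m' : ℕ) : (Fin (m'+1) → ZMod 2) ≃ (Fin (2^m') ⊕ Fin (2^m')) where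
  toFun f := if f 0 = 0 then .inl (encF m' fun j => f j.succ) else .inr (encF m' fun j => f j.succ)
  invFun := Sum.elim (fun i => Fin.cons 0 ((encF m').symm i)) (fun i => Fin.cons 1 ((encF m').symm i))
  left_inv f := by
    rcases zmod2_cases (f 0) with h | h
    · simp only [h, if_pos rfl, Sum.elim_inl, Equiv.symm_apply_apply]
      funext j
      cases j using Fin.cases with
      | zero => simp [h]
      | succ j => simp
    · simp only [h, if_neg (by decide : (1:ZMod 2) ≠ 0), Sum.elim_inr, Equiv.symm_apply_apply]
      funext j
      cases j using Fin.cases with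
      | zero => simp [h]
      | succ j => simp
  right_inv z := by
    cases z with
    | inl i =>
      have h : (fun j : Fin m' => (Fin.cons (0:ZMod 2) ((encF m').symm i) : Fin (m'+1) → ZMod 2) j.succ) = (encF m').symm i :=
        by funext j; simp
      simp only [Sum.elim_inl, Fin.cons_zero, if_pos rfl, h, Equiv.apply_symm_apply]
      exact if_pos trivial
    | inr i =>
      have h : (fun j : Fin m' => (Fin.cons (1:ZMod 2) ((encF m').symm i) : Fin (m'+1) → ZMod 2) j.succ) = (encF m').symm i :=
        by funext j; simp
      simp only [Sum.elim_inr, Fin.cons_zero, if_neg (by decide : ¬(1:ZMod 2) = 0), h, Equiv.apply_symm_apply]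

def Dsub (m' : ℕ) : AddSubgroup (Fin (2^m') → ZMod 4) where
  carrier := {a | ∃ (l : ZMod 4) (c : Fin m' → ZMod 2),
    a = fun i => l + liftZ2 (∑ j, c j * (encF m').symm i j)}
  zero_mem' := ⟨0, 0, by funext i; simp [liftZ2_zero]⟩
  add_mem' := by
    rintro a b ⟨l, c, rfl⟩ ⟨l', c', rfl⟩
    refine ⟨l + l', c + c', ?_⟩
    funext i
    simp only [Pi.add_apply, add_mul, Finset.sum_add_distrib, liftZ2_add]
    ring
  neg_mem' := by
    rintro a ⟨l, c, rfl⟩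
    refine ⟨-l, c, ?_⟩
    funext i
    simp only [Pi.neg_apply, neg_add, neg_liftZ2]

theorem rm1_z4linear (m : ℕ) (hm : 1 ≤ m) :
    IsZ4Linear (RM 1 m : Set ((Fin m → ZMod 2) → ZMod 2)) (2 ^ (m - 1)) := by
  obtain ⟨m', rfl⟩ : ∃ m', m = m' + 1 := ⟨m - 1, (Nat.succ_pred_eq_of_pos hm).symm⟩
  simp only [Nat.add_sub_cancel]
  refine ⟨eEquiv m', Dsub m', ?_⟩
  ext g
  simp only [Set.mem_image, SetLike.mem_coe]
  constructor
  · rintro ⟨f, hf, rfl⟩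
    rw [rm1_eq, mem_affSub] at hf
    obtain ⟨d, c, rfl⟩ := hf
    obtain ⟨l, hβ, hγ⟩ := exists_lam d (c 0)
    refine ⟨fun i => l + liftZ2 (∑ j, c j.succ * (encF m').symm i j),
      ⟨l, fun j => c j.succ, rfl⟩, ?_⟩
    funext z
    cases z with
    | inl i =>
      show grayMap _ _ = _
      simp only [grayMap, Sum.elim_inl, beta_lift, hβ, Function.comp_apply, eEquiv,
        Equiv.coe_fn_symm_mk, Sum.elim_inl, Fin.sum_univ_succ, Fin.cons_zero, Fin.cons_succ]
      ring_nf
    | inr i =>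
      show grayMap _ _ = _
      simp only [grayMap, Sum.elim_inr, gamma_lift, hγ, Function.comp_apply, eEquiv,
        Equiv.coe_fn_symm_mk, Sum.elim_inr, Fin.sum_univ_succ, Fin.cons_zero, Fin.cons_succ]
      ring_nf
  · rintro ⟨a, ha, rfl⟩
    obtain ⟨l, c, rfl⟩ := ha
    refine ⟨fun x => betaZ4 l + ∑ j, (Fin.cons (betaZ4 l + gammaZ4 l) c : Fin (m'+1) → ZMod 2) j * x j,
      ?_, ?_⟩
    · rw [rm1_eq]
      exact ⟨_, _, rfl⟩
    · funext z
      cases z with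
      | inl i =>
        show _ = grayMap _ _
        simp only [grayMap, Sum.elim_inl, beta_lift, Function.comp_apply, eEquiv,
          Equiv.coe_fn_symm_mk, Fin.sum_univ_succ, Fin.cons_zero, Fin.cons_succ]
        ring_nf
      | inr i =>
        show _ = grayMap _ _
        simp only [grayMap, Sum.elim_inr, gamma_lift, Function.comp_apply, eEquiv,
          Equiv.coe_fn_symm_mk, Fin.sum_univ_succ, Fin.cons_zero, Fin.cons_succ]
        ring_nf
        simp [show (2:ZMod 2) = 0 from rfl]
end

section
/- The second-order Reed-Muller code RM(2, m) of length 2^m (for m ≥ 2) satisfies the swap condition: for all u, v ∈ RM(2,m) with coordinates indexed by (Z/2Z)^{m-1} × Z/2Z (so the swap map s acts by flipping the last coordinate bit), the componentwise product (u + s(u)) ∗ (v + s(v)) lies in RM(2,m). -/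
/-- The coordinate permutation of `(Z/2Z)^m` flipping the last bit. -/
def flipLast {m : ℕ} (hm : 0 < m) (x : Fin m → ZMod 2) : Fin m → ZMod 2 :=
  Function.update x ⟨m - 1, by omega⟩ (x ⟨m - 1, by omega⟩ + 1)

lemma prodZ2_mul {m : ℕ} (S T : Finset (Fin m)) (x : Fin m → ZMod 2) :
    (∏ j ∈ S, x j) * (∏ j ∈ T, x j) = ∏ j ∈ S ∪ T, x j := by
  rw [← Finset.prod_union_inter]
  rw [← Finset.prod_sdiff (Finset.inter_subset_union (s := S) (t := T))]
  have h : ∀ a : ZMod 2, a * a = a := by decide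
  rw [mul_assoc, h]

lemma RM_mul {m r s : ℕ} {u v : (Fin m → ZMod 2) → ZMod 2}
    (hu : u ∈ RM r m) (hv : v ∈ RM s m) : u * v ∈ RM (r + s) m := by
  have h : RM r m * RM s m ≤ RM (r + s) m := by
    rw [RM, RM, Submodule.span_mul_span]
    apply Submodule.span_le.2
    rintro w ⟨a, ⟨S, hS, rfl⟩, b, ⟨T, hT, rfl⟩, rfl⟩
    apply Submodule.subset_span
    refine ⟨S ∪ T, ?_, ?_⟩
    · calc (S ∪ T).card ≤ S.card + T.card := Finset.card_union_le S T
        _ ≤ r + s := Nat.add_le_add hS hT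
    · funext x; exact (prodZ2_mul S T x)
  exact h (Submodule.mul_mem_mul hu hv)

lemma RM_flip {m : ℕ} (hm : 0 < m) {u : (Fin m → ZMod 2) → ZMod 2}
    (hu : u ∈ RM 2 m) : u + u ∘ flipLast hm ∈ RM 1 m := by
  set n : Fin m := ⟨m - 1, by omega⟩ with hn
  induction hu using Submodule.span_induction with
  | mem w hw =>
    obtain ⟨S, hS, rfl⟩ := hw
    by_cases hnS : n ∈ S
    · have key : (fun x => ∏ j ∈ S, x j) + (fun x => ∏ j ∈ S, x j) ∘ flipLast hm
          = fun x => ∏ j ∈ S.erase n, x j := by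
        funext x
        have h1 : ∏ j ∈ S, x j = x n * ∏ j ∈ S.erase n, x j :=
          (Finset.mul_prod_erase S x hnS).symm
        have h2 : ∏ j ∈ S, flipLast hm x j
            = (x n + 1) * ∏ j ∈ S.erase n, x j := by
          rw [← Finset.mul_prod_erase S _ hnS]
          congr 1
          · simp [flipLast, Function.update_apply, ← hn]
          · apply Finset.prod_congr rfl
            intro j hj
            simp [flipLast, Function.update_apply, ← hn, Finset.ne_of_mem_erase hj]
        simp only [Pi.add_apply, Function.comp_apply, h1, h2]
        have : ∀ a b : ZMod 2, a * b + (a + 1) * b = b := by decide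
        exact this _ _
      rw [key]
      exact Submodule.subset_span ⟨S.erase n, by
        rw [Finset.card_erase_of_mem hnS]; omega, rfl⟩
    · have key : (fun x => ∏ j ∈ S, x j) + (fun x => ∏ j ∈ S, x j) ∘ flipLast hm
          = 0 := by
        funext x
        have h2 : ∏ j ∈ S, flipLast hm x j = ∏ j ∈ S, x j := by
          apply Finset.prod_congr rfl
          intro j hj
          have : j ≠ n := fun h => hnS (h ▸ hj)
          simp [flipLast, Function.update_apply, ← hn, this]
        simp only [Pi.add_apply, Function.comp_apply, h2, Pi.zero_apply]
        exact CharTwo.add_self_eq_zero _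
      rw [key]; exact Submodule.zero_mem _
  | zero => simp only [Pi.zero_comp, add_zero]; exact Submodule.zero_mem (RM 1 m)
  | add a b _ _ ha hb =>
    have : (a + b) + (a + b) ∘ flipLast hm
        = (a + a ∘ flipLast hm) + (b + b ∘ flipLast hm) := by
      funext x; simp [Function.comp_apply]; ring
    rw [this]; exact Submodule.add_mem _ ha hb
  | smul c a _ ha =>
    have : (c • a) + (c • a) ∘ flipLast hm = c • (a + a ∘ flipLast hm) := by
      funext x; simp [Function.comp_apply, mul_add]
    rw [this]; exact Submodule.smul_mem _ _ ha

set_option maxHeartbeats 1000000 in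
theorem rm2_swap_condition (m : ℕ) (hm : 2 ≤ m)
    (u v : (Fin m → ZMod 2) → ZMod 2) (hu : u ∈ RM 2 m) (hv : v ∈ RM 2 m) :
    (u + u ∘ flipLast (show 0 < m by omega)) * (v + v ∘ flipLast (show 0 < m by omega))
      ∈ RM 2 m := by
  have h1 := RM_flip (show 0 < m by omega) hu
  have h2 := RM_flip (show 0 < m by omega) hv
  have h3 := RM_mul h1 h2
  exact h3
end

section
/- The extended Hamming code of length 2^m for m ≥ 5 is not Z4-linear: there is no permutation of its coordinates making it equal to the Gray image φ(D) of a linear code D over Z/4Z. -/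
lemma zmod2_add_self (a : ZMod 2) : a + a = 0 := by revert a; decide

lemma exists_not_mem_finset {α : Type*} [Fintype α] [DecidableEq α] (B : Finset α)
    (h : B.card < Fintype.card α) : ∃ v, v ∉ B := by
  by_contra h'
  push_neg at h'
  have hsub : Finset.univ ⊆ B := fun x _ => h' x
  have := Finset.card_le_card hsub
  rw [Finset.card_univ] at this
  omega

lemma sum_prod_eq_zero {m : ℕ} (T : Finset (Fin m)) (hT : T ≠ Finset.univ) :
    ∑ x : Fin m → ZMod 2, ∏ j ∈ T, x j = 0 := by
  obtain ⟨j0, hj0⟩ : ∃ j0, j0 ∉ T := by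
    by_contra h; push_neg at h; exact hT (Finset.eq_univ_iff_forall.mpr h)
  apply Finset.sum_ninvolution (fun x => Function.update x j0 (x j0 + 1))
  · intro x
    have hprod : ∏ j ∈ T, Function.update x j0 (x j0 + 1) j = ∏ j ∈ T, x j :=
      Finset.prod_congr rfl fun j hj =>
        Function.update_of_ne (fun h : j = j0 => hj0 (h ▸ hj)) _ _
    rw [hprod, zmod2_add_self]
  · intro x _ h
    have := congrFun h j0
    simp at this
  · intro x; exact Finset.mem_univ _
  · intro x
    funext j
    by_cases hj : j = j0
    · subst hj
      have h2 : ∀ a : ZMod 2, a + 1 + 1 = a := by decide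
      simp [Function.update_self, h2]
    · simp [Function.update_of_ne hj]


def deltaFn {m : ℕ} (c : Fin m → ZMod 2) : (Fin m → ZMod 2) → ZMod 2 :=
  fun x => ∏ j, (x j + c j + 1)

lemma deltaFn_eval {m : ℕ} (c x : Fin m → ZMod 2) :
    deltaFn c x = if x = c then 1 else 0 := by
  by_cases h : x = c
  · subst h
    have h1 : ∀ a : ZMod 2, a + a + 1 = 1 := by decide
    simp [deltaFn, h1]
  · rw [if_neg h]
    obtain ⟨j, hj⟩ := Function.ne_iff.mp h
    have h0 : ∀ a b : ZMod 2, a ≠ b → a + b + 1 = 0 := by decide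
    exact Finset.prod_eq_zero (Finset.mem_univ j) (h0 _ _ hj)

def evalFunc (m : ℕ) (j : Fin m) :
    ((Fin m → ZMod 2) → ZMod 2) →ₗ[ZMod 2] ZMod 2 where
  toFun f := ∑ x, x j * f x
  map_add' f g := by simp [mul_add, Finset.sum_add_distrib]
  map_smul' c f := by simp [Finset.mul_sum, mul_left_comm, smul_eq_mul]

lemma RM_le_ker (m r : ℕ) (hr : r + 1 < m) (j : Fin m) :
    RM r m ≤ LinearMap.ker (evalFunc m j) := by
  rw [RM, Submodule.span_le]
  rintro v ⟨S, hS, rfl⟩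
  simp only [SetLike.mem_coe, LinearMap.mem_ker]
  have hmul : ∀ a : ZMod 2, a * a = a := by decide
  have key : ∀ x : Fin m → ZMod 2, x j * ∏ i ∈ S, x i = ∏ i ∈ insert j S, x i := by
    intro x
    by_cases hj : j ∈ S
    · rw [Finset.insert_eq_self.mpr hj, ← Finset.mul_prod_erase S _ hj, ← mul_assoc, hmul]
    · rw [Finset.prod_insert hj]
  simp only [evalFunc, LinearMap.coe_mk, AddHom.coe_mk]
  simp only [key]
  apply sum_prod_eq_zero
  intro h
  have := congrArg Finset.card h
  rw [Finset.card_univ, Fintype.card_fin] at this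
  have h2 := Finset.card_insert_le j S
  omega

lemma planeFn_mem (m : ℕ) (a s t : Fin m → ZMod 2) :
    (fun x => deltaFn a x + deltaFn (a + s) x + deltaFn (a + t) x + deltaFn (a + s + t) x)
      ∈ RM (m - 2) m := by
  classical
  have hexp : ∀ (c x : Fin m → ZMod 2),
      deltaFn c x = ∑ T ∈ Finset.univ.powerset,
        (∏ j ∈ T, x j) * (∏ j ∈ Finset.univ \ T, (c j + 1)) := by
    intro c x
    rw [deltaFn]
    simp_rw [add_assoc]
    exact Finset.prod_add _ _ _
  set coeff : Finset (Fin m) → ZMod 2 := fun T =>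
    (∏ j ∈ Finset.univ \ T, (a j + 1)) + (∏ j ∈ Finset.univ \ T, ((a + s) j + 1))
      + (∏ j ∈ Finset.univ \ T, ((a + t) j + 1))
      + (∏ j ∈ Finset.univ \ T, ((a + s + t) j + 1)) with hcoeffdef
  have heq : (fun x => deltaFn a x + deltaFn (a + s) x + deltaFn (a + t) x
        + deltaFn (a + s + t) x)
      = ∑ T ∈ Finset.univ.powerset, coeff T • (fun x => ∏ j ∈ T, x j) := by
    funext x
    rw [hexp, hexp, hexp, hexp]
    rw [Finset.sum_apply]
    rw [← Finset.sum_add_distrib, ← Finset.sum_add_distrib, ← Finset.sum_add_distrib]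
    apply Finset.sum_congr rfl
    intro T _
    simp only [Pi.smul_apply, smul_eq_mul, hcoeffdef]
    ring
  rw [heq]
  apply Submodule.sum_mem
  intro T _
  by_cases hc : T.card ≤ m - 2
  · exact Submodule.smul_mem _ _ (Submodule.subset_span ⟨T, hc, rfl⟩)
  · have hTle : T.card ≤ m := by
      have := Finset.card_le_univ T
      simpa using this
    have hu : (Finset.univ \ T).card ≤ 1 := by
      rw [Finset.card_sdiff_of_subset (Finset.subset_univ T), Finset.card_univ, Fintype.card_fin]
      omega
    have hcoeff : coeff T = 0 := by
      rcases Nat.le_one_iff_eq_zero_or_eq_one.mp hu with h0 | h1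
      · have he : Finset.univ \ T = ∅ := Finset.card_eq_zero.mp h0
        have : (1 + 1 + 1 + 1 : ZMod 2) = 0 := by decide
        simp [hcoeffdef, he, this]
      · obtain ⟨j, hj⟩ := Finset.card_eq_one.mp h1
        have h4 : ∀ A S T : ZMod 2, (A + 1) + (A + S + 1) + (A + T + 1) + (A + S + T + 1) = 0 := by
          decide
        have := h4 (a j) (s j) (t j)
        simp only [hcoeffdef, hj, Finset.prod_singleton, Pi.add_apply]
        linear_combination this
    rw [hcoeff, zero_smul]
    exact Submodule.zero_mem _

theorem extendedHamming_not_z4linear (m : ℕ) (hm : 5 ≤ m) :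
    ¬ IsZ4Linear (RM (m - 2) m : Set ((Fin m → ZMod 2) → ZMod 2)) (2 ^ (m - 1)) := by
  rintro ⟨e, D, hCD⟩
  classical
  set σ : (Fin m → ZMod 2) → (Fin m → ZMod 2) := fun p => e.symm (Sum.swap (e p)) with hσdef
  have hσσ : ∀ p, σ (σ p) = p := by
    intro p
    simp only [hσdef, Equiv.apply_symm_apply, Sum.swap_swap, Equiv.symm_apply_apply]
  -- Gray map addition formula
  have hgray_add : ∀ (u v : Fin (2 ^ (m - 1)) → ZMod 4) (q : Fin (2 ^ (m - 1)) ⊕ Fin (2 ^ (m - 1))),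
      grayMap (u + v) q = grayMap u q + grayMap v q +
        (grayMap u q + grayMap u q.swap) * (grayMap v q + grayMap v q.swap) := by
    have hb : ∀ a b : ZMod 4, betaZ4 (a + b)
        = betaZ4 a + betaZ4 b + (betaZ4 a + gammaZ4 a) * (betaZ4 b + gammaZ4 b) := by decide
    have hg : ∀ a b : ZMod 4, gammaZ4 (a + b)
        = gammaZ4 a + gammaZ4 b + (betaZ4 a + gammaZ4 a) * (betaZ4 b + gammaZ4 b) := by decide
    rintro u v (i | i)
    · simp only [grayMap, Sum.elim_inl, Sum.swap_inl, Sum.elim_inr, Pi.add_apply]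
      rw [hb (u i) (v i)]
    · simp only [grayMap, Sum.elim_inr, Sum.swap_inr, Sum.elim_inl, Pi.add_apply]
      rw [hg (u i) (v i)]
      ring
  -- closure property
  have hclose : ∀ x ∈ RM (m - 2) m, ∀ y ∈ RM (m - 2) m,
      (fun p => (x p + x (σ p)) * (y p + y (σ p))) ∈ RM (m - 2) m := by
    intro x hx y hy
    have hx' : x ∘ e.symm ∈ grayMap '' (D : Set (Fin (2 ^ (m - 1)) → ZMod 4)) := by
      rw [← hCD]; exact ⟨x, hx, rfl⟩
    obtain ⟨u, hu, hux⟩ := hx'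
    have hy' : y ∘ e.symm ∈ grayMap '' (D : Set (Fin (2 ^ (m - 1)) → ZMod 4)) := by
      rw [← hCD]; exact ⟨y, hy, rfl⟩
    obtain ⟨v, hv, hvy⟩ := hy'
    have huv : grayMap (u + v) ∈ grayMap '' (D : Set (Fin (2 ^ (m - 1)) → ZMod 4)) :=
      ⟨u + v, D.add_mem hu hv, rfl⟩
    rw [← hCD] at huv
    obtain ⟨z, hz, hze⟩ := huv
    have hzval : ∀ p, z p = x p + y p + (x p + x (σ p)) * (y p + y (σ p)) := by
      intro p
      have h1 : z p = grayMap (u + v) (e p) := by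
        have := congrFun hze (e p)
        simpa using this
      rw [h1, hgray_add]
      rw [congrFun hux, congrFun hux, congrFun hvy, congrFun hvy]
      simp [Function.comp_apply, Equiv.symm_apply_apply]
      rfl
    have heq2 : (fun p => (x p + x (σ p)) * (y p + y (σ p))) = z - x - y := by
      funext p
      simp only [Pi.sub_apply]
      rw [hzval p]
      ring
    rw [heq2]
    exact Submodule.sub_mem _ (Submodule.sub_mem _ hz hx) hy
  -- counting setup
  have hcard : Fintype.card (Fin m → ZMod 2) = 2 ^ m := by
    rw [Fintype.card_fun, ZMod.card, Fintype.card_fin]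
  have h32 : 32 ≤ 2 ^ m := by
    calc (32 : ℕ) = 2 ^ 5 := by norm_num
    _ ≤ 2 ^ m := Nat.pow_le_pow_right (by norm_num) hm
  -- component helpers
  have hcomp0 : ∀ a b : ZMod 2, a + b = 0 → a = b := by decide
  have hcompc : ∀ a b c : ZMod 2, a + b = c → b = a + c := by decide
  have hpi0 : ∀ u v : Fin m → ZMod 2, u + v = 0 → u = v := by
    intro u v h; funext j; exact hcomp0 _ _ (congrFun h j)
  have hflip : ∀ u v w : Fin m → ZMod 2, u + v = w → v = u + w := by
    intro u v w h; funext j; exact hcompc _ _ _ (congrFun h j)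
  set b : Fin m → ZMod 2 := σ 0 with hbdef
  have hb0 : b ≠ 0 := by
    intro h
    have h2 : Sum.swap (e 0) = e 0 := by
      have h3 := congrArg e h
      rw [hbdef, hσdef] at h3
      simpa using h3
    rcases he : e 0 with i | i <;> rw [he] at h2 <;> simp at h2
  -- choose s1, t1
  obtain ⟨s1, hs1⟩ := exists_not_mem_finset ({0, b} : Finset (Fin m → ZMod 2)) (by
    have h1 : ({0, b} : Finset (Fin m → ZMod 2)).card ≤ 2 :=
      le_trans (Finset.card_insert_le _ _) (by simp)
    rw [hcard]; exact lt_of_le_of_lt (by omega : _ ≤ 31) (by omega))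
  simp only [Finset.mem_insert, Finset.mem_singleton, not_or] at hs1
  obtain ⟨hs10, hs1b⟩ := hs1
  obtain ⟨t1, ht1⟩ := exists_not_mem_finset ({0, s1, b, b + s1} : Finset (Fin m → ZMod 2)) (by
    have h1 : ({0, s1, b, b + s1} : Finset (Fin m → ZMod 2)).card ≤ 4 :=
      le_trans (Finset.card_insert_le _ _) (by
        have := Finset.card_insert_le s1 ({b, b + s1} : Finset (Fin m → ZMod 2))
        have := Finset.card_insert_le b ({b + s1} : Finset (Fin m → ZMod 2))
        simp only [Finset.card_singleton] at *
        omega)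
    rw [hcard]; exact lt_of_le_of_lt (by omega : _ ≤ 31) (by omega))
  simp only [Finset.mem_insert, Finset.mem_singleton, not_or] at ht1
  obtain ⟨ht10, ht1s1, ht1b, ht1bs⟩ := ht1
  set P4 : Finset (Fin m → ZMod 2) := {0, s1, t1, s1 + t1} with hP4
  set W : Finset (Fin m → ZMod 2) := P4 ∪ P4.image σ with hW
  have hP4card : P4.card ≤ 4 := by
    refine le_trans (Finset.card_insert_le _ _) ?_
    have h2 := Finset.card_insert_le s1 ({t1, s1 + t1} : Finset (Fin m → ZMod 2))
    have h3 := Finset.card_insert_le t1 ({s1 + t1} : Finset (Fin m → ZMod 2))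
    simp only [Finset.card_singleton] at *
    omega
  have hWcard : W.card ≤ 8 := by
    rw [hW]
    have h1 := Finset.card_union_le P4 (P4.image σ)
    have h2 := Finset.card_image_le (s := P4) (f := σ)
    omega
  -- membership facts about W
  have h0P4 : (0 : Fin m → ZMod 2) ∈ P4 := by simp [hP4]
  have hP4W : P4 ⊆ W := Finset.subset_union_left
  have hσP4W : ∀ p ∈ P4, σ p ∈ W := fun p hp =>
    Finset.mem_union_right _ (Finset.mem_image_of_mem σ hp)
  have hbW : b ∈ W := hσP4W 0 h0P4
  -- choose s2, t2
  obtain ⟨s2, hs2⟩ := exists_not_mem_finset (insert 0 W) (by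
    have h1 := Finset.card_insert_le (0 : Fin m → ZMod 2) W
    rw [hcard]; exact lt_of_le_of_lt (by omega : _ ≤ 31) (by omega))
  simp only [Finset.mem_insert, not_or] at hs2
  obtain ⟨hs20, hs2W⟩ := hs2
  obtain ⟨t2, ht2⟩ := exists_not_mem_finset
      ((W ∪ W.image (fun w => s2 + w)) ∪ {0, s2} : Finset (Fin m → ZMod 2)) (by
    have h1 := Finset.card_union_le (W ∪ W.image (fun w => s2 + w)) ({0, s2} : Finset (Fin m → ZMod 2))
    have h2 := Finset.card_union_le W (W.image (fun w => s2 + w))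
    have h3 := Finset.card_image_le (s := W) (f := fun w => s2 + w)
    have h4 : ({0, s2} : Finset (Fin m → ZMod 2)).card ≤ 2 :=
      le_trans (Finset.card_insert_le _ _) (by simp)
    rw [hcard]; exact lt_of_le_of_lt (by omega : _ ≤ 31) (by omega))
  simp only [Finset.mem_union, Finset.mem_insert, Finset.mem_singleton, not_or] at ht2
  obtain ⟨⟨ht2W, ht2img⟩, ht20, ht2s2⟩ := ht2
  have hst2W : s2 + t2 ∉ W := by
    intro h
    apply ht2img
    refine Finset.mem_image.mpr ⟨s2 + t2, h, ?_⟩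
    funext j
    have : ∀ a c : ZMod 2, a + (a + c) = c := by decide
    exact this _ _
  -- the two codewords
  set xf : (Fin m → ZMod 2) → ZMod 2 :=
    fun p => deltaFn 0 p + deltaFn (0 + s1) p + deltaFn (0 + t1) p + deltaFn (0 + s1 + t1) p
    with hxfdef
  set yf : (Fin m → ZMod 2) → ZMod 2 :=
    fun p => deltaFn 0 p + deltaFn (0 + s2) p + deltaFn (0 + t2) p + deltaFn (0 + s2 + t2) p
    with hyfdef
  have hxfmem : xf ∈ RM (m - 2) m := planeFn_mem m 0 s1 t1
  have hyfmem : yf ∈ RM (m - 2) m := planeFn_mem m 0 s2 t2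
  have hxf : ∀ p, xf p = (if p = 0 then 1 else 0) + (if p = s1 then 1 else 0)
      + (if p = t1 then 1 else 0) + (if p = s1 + t1 then 1 else 0) := by
    intro p
    simp only [hxfdef, deltaFn_eval, zero_add]
  have hyf : ∀ p, yf p = (if p = 0 then 1 else 0) + (if p = s2 then 1 else 0)
      + (if p = t2 then 1 else 0) + (if p = s2 + t2 then 1 else 0) := by
    intro p
    simp only [hyfdef, deltaFn_eval, zero_add]
  -- derived distinctness
  have hst10 : s1 + t1 ≠ 0 := fun h => ht1s1 ((hpi0 _ _ h).symm)
  have hst20 : s2 + t2 ≠ 0 := fun h => ht2s2 ((hpi0 _ _ h).symm)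
  have hbst1 : b ≠ s1 + t1 := by
    intro h
    apply ht1bs
    have := hflip s1 t1 b h.symm
    rw [this, add_comm]
  -- values
  have hxf0 : xf 0 = 1 := by
    rw [hxf]; simp [Ne.symm hs10, Ne.symm ht10, Ne.symm hst10]
  have hxfb : xf b = 0 := by
    rw [hxf]; simp [hb0, Ne.symm hs1b, Ne.symm ht1b, hbst1]
  have hyf0 : yf 0 = 1 := by
    rw [hyf]; simp [Ne.symm hs20, Ne.symm ht20, Ne.symm hst20]
  have hyfb : yf b = 0 := by
    have hbs2 : b ≠ s2 := fun h => hs2W (h ▸ hbW)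
    have hbt2 : b ≠ t2 := fun h => ht2W (h ▸ hbW)
    have hbst2 : b ≠ s2 + t2 := fun h => hst2W (h ▸ hbW)
    rw [hyf]; simp [hb0, hbs2, hbt2, hbst2]
  have hxf_zero : ∀ p, p ∉ P4 → xf p = 0 := by
    intro p hp
    simp only [hP4, Finset.mem_insert, Finset.mem_singleton, not_or] at hp
    obtain ⟨h1, h2, h3, h4⟩ := hp
    rw [hxf]; simp [h1, h2, h3, h4]
  have hyf_zero : ∀ p, p ≠ 0 → p ≠ s2 → p ≠ t2 → p ≠ s2 + t2 → yf p = 0 := by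
    intro p h1 h2 h3 h4
    rw [hyf]; simp [h1, h2, h3, h4]
  have hX0 : ∀ p, p ∉ W → xf p + xf (σ p) = 0 := by
    intro p hpW
    have h1 : xf p = 0 := hxf_zero p (fun h => hpW (hP4W h))
    have h2 : xf (σ p) = 0 := by
      refine hxf_zero _ (fun h => hpW ?_)
      have h3 := hσP4W _ h
      rwa [hσσ] at h3
    rw [h1, h2, add_zero]
  -- the key codeword g
  have hg := hclose xf hxfmem yf hyfmem
  have hgeq : (fun p => (xf p + xf (σ p)) * (yf p + yf (σ p)))
      = fun p => (if p = 0 then 1 else 0) + (if p = b then (1 : ZMod 2) else 0) := by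
    funext p
    by_cases hp0 : p = 0
    · subst hp0
      rw [show σ 0 = b from rfl, hxf0, hxfb, hyf0, hyfb, if_pos rfl, if_neg (Ne.symm hb0)]
      norm_num
    · by_cases hpb : p = b
      · subst hpb
        have hσb : σ b = 0 := by rw [hbdef, hσσ]
        rw [hσb, hxfb, hxf0, hyfb, hyf0, if_neg hb0, if_pos rfl]
        norm_num
      · rw [if_neg hp0, if_neg hpb, add_zero]
        by_cases hq1 : p = s2 ∨ p = t2 ∨ p = s2 + t2
        · have hpW : p ∉ W := by rcases hq1 with h | h | h <;> subst h <;> assumption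
          rw [hX0 p hpW, zero_mul]
        · by_cases hq2 : σ p = s2 ∨ σ p = t2 ∨ σ p = s2 + t2
          · have hpW : σ p ∉ W := by rcases hq2 with h | h | h <;> rw [h] <;> assumption
            have h5 := hX0 (σ p) hpW
            rw [hσσ] at h5
            rw [add_comm (xf p) (xf (σ p)), h5, zero_mul]
          · push_neg at hq1 hq2
            have hσp0 : σ p ≠ 0 := by
              intro h
              apply hpb
              rw [← hσσ p, h, hbdef]
            have h1 : yf p = 0 := hyf_zero p hp0 hq1.1 hq1.2.1 hq1.2.2
            have h2 : yf (σ p) = 0 := hyf_zero _ hσp0 hq2.1 hq2.2.1 hq2.2.2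
            rw [h1, h2, add_zero, mul_zero]
  rw [hgeq] at hg
  obtain ⟨j, hj⟩ := Function.ne_iff.mp hb0
  have hker := RM_le_ker m (m - 2) (by omega) j hg
  rw [LinearMap.mem_ker] at hker
  have heval : evalFunc m j
      (fun p => (if p = 0 then 1 else 0) + (if p = b then (1 : ZMod 2) else 0)) = b j := by
    simp only [evalFunc, LinearMap.coe_mk, AddHom.coe_mk]
    rw [Finset.sum_congr rfl (fun p _ => mul_add (p j) _ _), Finset.sum_add_distrib]
    simp [mul_ite, mul_one, mul_zero, Finset.sum_ite_eq']
  rw [heval] at hker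
  simp only [Pi.zero_apply] at hj
  exact hj hker
end

section
/- If D is a linear code over Z/4Z of length n, C = φ(D), and C^{⊥₄} = φ(D⊥), then the Hamming weight enumerators satisfy the MacWilliams relation W_{C^{⊥₄}}(x,y) = (1/|C|) · W_C(x+y, x−y), even though C and C^{⊥₄} need not be linear binary codes. -/
/-- Number of coordinates equal to 0. -/
def N0 {n : ℕ} (a : Fin n → ZMod 4) : ℕ := (Finset.univ.filter fun i => a i = 0).card
/-- Number of coordinates equal to ±1. -/
def N1 {n : ℕ} (a : Fin n → ZMod 4) : ℕ :=
  (Finset.univ.filter fun i => a i = 1 ∨ a i = 3).card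
/-- Number of coordinates equal to 2. -/
def N2 {n : ℕ} (a : Fin n → ZMod 4) : ℕ := (Finset.univ.filter fun i => a i = 2).card

/-- The dual of a quaternary code under the standard inner product mod 4. -/
def dualSet {n : ℕ} (D : Set (Fin n → ZMod 4)) : Set (Fin n → ZMod 4) :=
  { b | ∀ a ∈ D, ∑ i, a i * b i = 0 }

/-! ### Auxiliary definitions and lemmas -/

/-- The Lee weight on `ZMod 4`. -/
def leeWt (c : ZMod 4) : ℕ := if c = 0 then 0 else if c = 2 then 2 else 1

lemma leeWt_le_two : ∀ c : ZMod 4, leeWt c ≤ 2 := by decide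

/-- The finset attached to a set of quaternary words. -/
noncomputable def codeFinset {n : ℕ} (s : Set (Fin n → ZMod 4)) : Finset (Fin n → ZMod 4) :=
  letI := Classical.dec
  Finset.univ.filter (· ∈ s)

lemma mem_codeFinset {n : ℕ} {s : Set (Fin n → ZMod 4)} {a : Fin n → ZMod 4} :
    a ∈ codeFinset s ↔ a ∈ s := by
  classical
  simp [codeFinset]

lemma coe_codeFinset {n : ℕ} (s : Set (Fin n → ZMod 4)) :
    ((codeFinset s : Finset (Fin n → ZMod 4)) : Set (Fin n → ZMod 4)) = s := by
  ext a; simp [mem_codeFinset]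

/-- The per-coordinate weight-enumerator sum. -/
noncomputable def wSum {n : ℕ} (F : Finset (Fin n → ZMod 4)) (S : Type) [CommRing S]
    (x y : S) : S :=
  ∑ a ∈ F, ∏ i, x ^ (2 - leeWt (a i)) * y ^ leeWt (a i)

lemma map_wSum {n : ℕ} (F : Finset (Fin n → ZMod 4)) {S S' : Type} [CommRing S] [CommRing S']
    (h : S →+* S') (x y : S) : h (wSum F S x y) = wSum F S' (h x) (h y) := by
  simp [wSum, map_sum, map_prod, map_pow, map_mul]

lemma zmod4_sum {M : Type*} [AddCommMonoid M] (F : ZMod 4 → M) :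
    ∑ b, F b = F 0 + (F 1 + (F 2 + F 3)) := by
  have h : (Finset.univ : Finset (ZMod 4)) = {0, 1, 2, 3} := by decide
  rw [h, Finset.sum_insert (by decide), Finset.sum_insert (by decide),
    Finset.sum_insert (by decide), Finset.sum_singleton]

lemma hammingNorm_gray {n : ℕ} (a : Fin n → ZMod 4) :
    hammingNorm (grayMap a) = ∑ i, leeWt (a i) := by
  have key : ∀ c : ZMod 4,
      ((if betaZ4 c ≠ 0 then 1 else 0) + (if gammaZ4 c ≠ 0 then 1 else 0) : ℕ) = leeWt c := by
    decide
  show (Finset.univ.filter fun j => grayMap a j ≠ 0).card = _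
  rw [Finset.card_filter]
  rw [Fintype.sum_sum_type]
  rw [← Finset.sum_add_distrib]
  exact Finset.sum_congr rfl fun i _ => key (a i)

open Finset MvPolynomial in
lemma main_domain {n : ℕ} (D : AddSubgroup (Fin n → ZMod 4)) (S : Type) [CommRing S]
    [IsDomain S] (ι : S) (hι : ι ^ 2 = -1) (h2 : (2 : S) ≠ 0) (x y : S) :
    ((codeFinset (D : Set (Fin n → ZMod 4))).card : S) *
      wSum (codeFinset (dualSet (D : Set (Fin n → ZMod 4)))) S x y =
    wSum (codeFinset (D : Set (Fin n → ZMod 4))) S (x + y) (x - y) := by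
  classical
  set χ : ZMod 4 → S := fun c => ι ^ c.val with hχ
  set A := codeFinset (D : Set (Fin n → ZMod 4)) with hA
  set B := codeFinset (dualSet (D : Set (Fin n → ZMod 4))) with hB
  have hι4 : ι ^ 4 = 1 := by
    rw [show (4 : ℕ) = 2 * 2 from rfl, pow_mul, hι]; ring
  have hχmod : ∀ m : ℕ, ι ^ (m % 4) = ι ^ m := by
    intro m
    conv_rhs => rw [← Nat.div_add_mod m 4]
    rw [pow_add, pow_mul, hι4, one_pow, one_mul]
  have hχadd : ∀ u v : ZMod 4, χ (u + v) = χ u * χ v := by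
    intro u v
    simp only [hχ]
    rw [ZMod.val_add, hχmod, pow_add]
  have hχ0 : χ 0 = 1 := by simp [hχ]
  have hv1 : χ 1 = ι := by
    show ι ^ (1 : ZMod 4).val = ι
    rw [show (1 : ZMod 4).val = 1 from rfl, pow_one]
  have hv2 : χ 2 = -1 := by
    show ι ^ (2 : ZMod 4).val = -1
    rw [show (2 : ZMod 4).val = 2 from rfl, hι]
  have hv3 : χ 3 = -ι := by
    show ι ^ (3 : ZMod 4).val = -ι
    rw [show (3 : ZMod 4).val = 3 from rfl, pow_succ, hι]; ring
  have hne1 : ι ≠ 1 := by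
    intro h; apply h2
    have h' := hι; rw [h, one_pow] at h'
    linear_combination h'
  have hχne1 : ∀ c : ZMod 4, c ≠ 0 → χ c ≠ 1 := by
    have hcases : ∀ c : ZMod 4, c ≠ 0 → c = 1 ∨ c = 2 ∨ c = 3 := by decide
    intro c hc
    rcases hcases c hc with rfl | rfl | rfl
    · rw [hv1]; exact hne1
    · rw [hv2]; intro h; exact h2 (by linear_combination -h)
    · rw [hv3]; intro h
      apply h2
      have h' := hι
      have hιeq : ι = -1 := by linear_combination -h
      rw [hιeq] at h'
      linear_combination h'
  have hχsum : ∀ (h : Fin n → ZMod 4), χ (∑ i, h i) = ∏ i, χ (h i) := by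
    intro h
    have : ∀ s : Finset (Fin n), χ (∑ i ∈ s, h i) = ∏ i ∈ s, χ (h i) := by
      intro s
      induction s using Finset.induction_on with
      | empty => simpa using hχ0
      | insert _ _ hx ih => rw [Finset.sum_insert hx, Finset.prod_insert hx, hχadd, ih]
    exact this _
  -- orthogonality relations
  have horth : ∀ b : Fin n → ZMod 4,
      ∑ a ∈ A, χ (∑ i, a i * b i) =
        if b ∈ dualSet (D : Set (Fin n → ZMod 4)) then (A.card : S) else 0 := by
    intro b
    by_cases hb : b ∈ dualSet (D : Set (Fin n → ZMod 4))
    · rw [if_pos hb]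
      rw [Finset.sum_congr rfl (fun a ha => by
        rw [hb a (mem_codeFinset.1 ha), hχ0])]
      simp
    · rw [if_neg hb]
      have : ¬ (∀ a ∈ D, ∑ i, a i * b i = 0) := hb
      push_neg at this
      obtain ⟨a0, ha0D, ha0⟩ := this
      have hsplit : ∀ a : Fin n → ZMod 4,
          χ (∑ i, (a0 + a) i * b i) = χ (∑ i, a0 i * b i) * χ (∑ i, a i * b i) := by
        intro a
        rw [← hχadd]
        congr 1
        rw [← Finset.sum_add_distrib]
        exact Finset.sum_congr rfl fun i _ => by simp [add_mul]
      have hbij : ∑ a ∈ A, χ (∑ i, (a0 + a) i * b i) =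
          ∑ a ∈ A, χ (∑ i, a i * b i) := by
        refine Finset.sum_nbij' (fun a => a0 + a) (fun a => a - a0) ?_ ?_ ?_ ?_ ?_
        · intro a ha
          exact mem_codeFinset.2 (D.add_mem ha0D (mem_codeFinset.1 ha))
        · intro a ha
          exact mem_codeFinset.2 (D.sub_mem (mem_codeFinset.1 ha) ha0D)
        · intro a _; exact add_sub_cancel_left a0 a
        · intro a _; exact add_sub_cancel a0 a
        · intro a _; rfl
      have hTT : χ (∑ i, a0 i * b i) * (∑ a ∈ A, χ (∑ i, a i * b i)) =
          ∑ a ∈ A, χ (∑ i, a i * b i) := by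
        rw [Finset.mul_sum, ← hbij]
        exact Finset.sum_congr rfl fun a _ => (hsplit a).symm
      have hfac : (χ (∑ i, a0 i * b i) - 1) * (∑ a ∈ A, χ (∑ i, a i * b i)) = 0 := by
        linear_combination hTT
      rcases mul_eq_zero.1 hfac with h | h
      · exact absurd (by linear_combination h) (hχne1 _ ha0)
      · exact h
  -- character expansion of the per-letter factors
  have hgchar : ∀ c : ZMod 4,
      (∑ b : ZMod 4, χ (c * b) * (x ^ (2 - leeWt b) * y ^ leeWt b)) =
        (x + y) ^ (2 - leeWt c) * (x - y) ^ leeWt c := by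
    have hcases : ∀ c : ZMod 4, c = 0 ∨ c = 1 ∨ c = 2 ∨ c = 3 := by decide
    intro c
    rw [zmod4_sum]
    rcases hcases c with rfl | rfl | rfl | rfl
    · simp only [zero_mul, hχ0, show leeWt 0 = 0 by decide, show leeWt 1 = 1 by decide,
        show leeWt 2 = 2 by decide, show leeWt 3 = 1 by decide]
      norm_num; ring
    · simp only [mul_zero, mul_one, show (1 : ZMod 4) * 2 = 2 by decide,
        show (1 : ZMod 4) * 3 = 3 by decide, hχ0, hv1, hv2, hv3,
        show leeWt 0 = 0 by decide, show leeWt 1 = 1 by decide,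
        show leeWt 2 = 2 by decide, show leeWt 3 = 1 by decide]
      norm_num; ring
    · simp only [mul_zero, mul_one, show (2 : ZMod 4) * 2 = 0 by decide,
        show (2 : ZMod 4) * 3 = 2 by decide, hχ0, hv1, hv2, hv3,
        show leeWt 0 = 0 by decide, show leeWt 1 = 1 by decide,
        show leeWt 2 = 2 by decide, show leeWt 3 = 1 by decide]
      norm_num; ring
    · simp only [mul_zero, mul_one, show (3 : ZMod 4) * 2 = 2 by decide,
        show (3 : ZMod 4) * 3 = 1 by decide, hχ0, hv1, hv2, hv3,
        show leeWt 0 = 0 by decide, show leeWt 1 = 1 by decide,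
        show leeWt 2 = 2 by decide, show leeWt 3 = 1 by decide]
      norm_num; ring
  -- the main computation
  symm
  calc wSum A S (x + y) (x - y)
      = ∑ a ∈ A, ∏ i, ∑ b : ZMod 4, χ (a i * b) * (x ^ (2 - leeWt b) * y ^ leeWt b) := by
        rw [wSum]
        exact Finset.sum_congr rfl fun a _ => Finset.prod_congr rfl fun i _ =>
          (hgchar (a i)).symm
    _ = ∑ a ∈ A, ∑ bb : Fin n → ZMod 4,
          ∏ i, χ (a i * bb i) * (x ^ (2 - leeWt (bb i)) * y ^ leeWt (bb i)) := by
        refine Finset.sum_congr rfl fun a _ => ?_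
        rw [Finset.prod_univ_sum]
        rw [Fintype.piFinset_univ]
    _ = ∑ bb : Fin n → ZMod 4, ∑ a ∈ A,
          ∏ i, χ (a i * bb i) * (x ^ (2 - leeWt (bb i)) * y ^ leeWt (bb i)) :=
        Finset.sum_comm
    _ = ∑ bb : Fin n → ZMod 4, (∑ a ∈ A, χ (∑ i, a i * bb i)) *
          ∏ i, x ^ (2 - leeWt (bb i)) * y ^ leeWt (bb i) := by
        refine Finset.sum_congr rfl fun bb _ => ?_
        rw [Finset.sum_mul]
        refine Finset.sum_congr rfl fun a _ => ?_
        rw [hχsum, ← Finset.prod_mul_distrib]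
    _ = ∑ bb : Fin n → ZMod 4,
          (if bb ∈ dualSet (D : Set (Fin n → ZMod 4)) then (A.card : S) else 0) *
          ∏ i, x ^ (2 - leeWt (bb i)) * y ^ leeWt (bb i) := by
        refine Finset.sum_congr rfl fun bb _ => ?_
        rw [horth]
    _ = ∑ bb ∈ B,
          (if bb ∈ dualSet (D : Set (Fin n → ZMod 4)) then (A.card : S) else 0) *
          ∏ i, x ^ (2 - leeWt (bb i)) * y ^ leeWt (bb i) := by
        refine (Finset.sum_subset (Finset.subset_univ B) fun bb _ hbb => ?_).symm
        rw [if_neg fun h => hbb (mem_codeFinset.2 h), zero_mul]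
    _ = ∑ bb ∈ B, (A.card : S) * ∏ i, x ^ (2 - leeWt (bb i)) * y ^ leeWt (bb i) := by
        refine Finset.sum_congr rfl fun bb hbb => ?_
        rw [if_pos (mem_codeFinset.1 hbb)]
    _ = (A.card : S) * wSum B S x y := by rw [wSum, Finset.mul_sum]

open MvPolynomial in
lemma key_identity {n : ℕ} (D : AddSubgroup (Fin n → ZMod 4)) (R : Type) [CommRing R]
    (x y : R) :
    ((codeFinset (D : Set (Fin n → ZMod 4))).card : R) *
      wSum (codeFinset (dualSet (D : Set (Fin n → ZMod 4)))) R x y =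
    wSum (codeFinset (D : Set (Fin n → ZMod 4))) R (x + y) (x - y) := by
  classical
  set A := codeFinset (D : Set (Fin n → ZMod 4))
  set B := codeFinset (dualSet (D : Set (Fin n → ZMod 4)))
  have hι : (C ⟨0, 1⟩ : MvPolynomial (Fin 2) GaussianInt) ^ 2 = -1 := by
    rw [← map_pow, show ((⟨0, 1⟩ : GaussianInt) ^ 2) = -1 by decide, map_neg, map_one]
  have h2 : (2 : MvPolynomial (Fin 2) GaussianInt) ≠ 0 := two_ne_zero
  have hQ := main_domain D (MvPolynomial (Fin 2) GaussianInt) (C ⟨0, 1⟩) hι h2 (X 0) (X 1)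
  have hP : ((A.card : MvPolynomial (Fin 2) ℤ)) *
      wSum B (MvPolynomial (Fin 2) ℤ) (X 0) (X 1) =
      wSum A (MvPolynomial (Fin 2) ℤ) (X 0 + X 1) (X 0 - X 1) := by
    apply MvPolynomial.map_injective (Int.castRingHom GaussianInt) Int.cast_injective
    rw [map_mul, map_natCast, map_wSum B (MvPolynomial.map (Int.castRingHom GaussianInt)),
      map_wSum A (MvPolynomial.map (Int.castRingHom GaussianInt))]
    simpa using hQ
  have := congrArg (MvPolynomial.eval₂Hom (Int.castRingHom R) ![x, y]) hP
  rw [map_mul, map_natCast, map_wSum, map_wSum] at this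
  simpa using this

theorem gray_macwilliams {n : ℕ} (D : AddSubgroup (Fin n → ZMod 4))
    (R : Type) [CommRing R] (x y : R) :
    (Nat.card (grayMap '' (D : Set (Fin n → ZMod 4))) : R) *
      ∑ᶠ c ∈ grayMap '' (dualSet (D : Set (Fin n → ZMod 4))),
        x ^ (2 * n - hammingNorm c) * y ^ hammingNorm c =
    ∑ᶠ c ∈ grayMap '' (D : Set (Fin n → ZMod 4)),
        (x + y) ^ (2 * n - hammingNorm c) * (x - y) ^ hammingNorm c := by
  classical
  have hinj : Function.Injective (grayMap (n := n)) := grayMap_injective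
  have hterm : ∀ (u v : R) (a : Fin n → ZMod 4),
      u ^ (2 * n - hammingNorm (grayMap a)) * v ^ hammingNorm (grayMap a) =
        ∏ i, u ^ (2 - leeWt (a i)) * v ^ leeWt (a i) := by
    intro u v a
    rw [hammingNorm_gray]
    have h1 : 2 * n - ∑ i, leeWt (a i) = ∑ i : Fin n, (2 - leeWt (a i)) := by
      have h2 : ∑ i : Fin n, (2 - leeWt (a i)) + ∑ i, leeWt (a i) = 2 * n := by
        rw [← Finset.sum_add_distrib]
        rw [Finset.sum_congr rfl (fun i _ => Nat.sub_add_cancel (leeWt_le_two (a i)))]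
        simp [mul_comm]
      omega
    rw [h1, ← Finset.prod_pow_eq_pow_sum, ← Finset.prod_pow_eq_pow_sum,
      ← Finset.prod_mul_distrib]
  have hconv : ∀ (s : Set (Fin n → ZMod 4)) (u v : R),
      (∑ᶠ c ∈ grayMap '' s, u ^ (2 * n - hammingNorm c) * v ^ hammingNorm c) =
        wSum (codeFinset s) R u v := by
    intro s u v
    rw [finsum_mem_image (Set.injOn_of_injective hinj)]
    calc ∑ᶠ a ∈ s, u ^ (2 * n - hammingNorm (grayMap a)) * v ^ hammingNorm (grayMap a)
        = ∑ᶠ a ∈ ((codeFinset s : Finset (Fin n → ZMod 4)) : Set (Fin n → ZMod 4)),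
            u ^ (2 * n - hammingNorm (grayMap a)) * v ^ hammingNorm (grayMap a) := by
          rw [coe_codeFinset]
      _ = ∑ a ∈ codeFinset s,
            u ^ (2 * n - hammingNorm (grayMap a)) * v ^ hammingNorm (grayMap a) :=
          finsum_mem_coe_finset _ _
      _ = wSum (codeFinset s) R u v := by
          rw [wSum]; exact Finset.sum_congr rfl fun a _ => hterm u v a
  have hcard : (Nat.card (grayMap '' (D : Set (Fin n → ZMod 4))) : ℕ) =
      (codeFinset (D : Set (Fin n → ZMod 4))).card := by
    rw [Nat.card_image_of_injective hinj, Nat.card_coe_set_eq]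
    conv_lhs => rw [← coe_codeFinset (D : Set (Fin n → ZMod 4))]
    rw [Set.ncard_coe_finset]
  rw [hconv, hconv, hcard]
  exact key_identity D R x y
end

section
/- Let h₂(X) ∈ (Z/2Z)[X] be a primitive irreducible polynomial of degree m, and let n = 2^m − 1. Then there exists a unique monic polynomial h(X) ∈ (Z/4Z)[X] of degree m such that h(X) ≡ h₂(X) (mod 2) and h(X) divides Xⁿ − 1 in (Z/4Z)[X]. -/
open Polynomial

lemma zmod4_aux1 : ∀ c : ZMod 4, ZMod.castHom (show 2 ∣ 4 by norm_num) (ZMod 2) c = 0 → 2 * c = 0 := by decide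
lemma zmod4_aux2 : ∀ c : ZMod 4, 2 * c = 0 → ZMod.castHom (show 2 ∣ 4 by norm_num) (ZMod 2) c = 0 := by decide
lemma zmod4_aux3' : ∀ c : ZMod 4, ZMod.castHom (show 2 ∣ 4 by norm_num) (ZMod 2) c = 0 → c = 0 ∨ c = 2 := by decide
lemma zmod4_aux3 : ∀ c : ZMod 4, ZMod.castHom (show 2 ∣ 4 by norm_num) (ZMod 2) c = 0 → 2 ∣ c := by
  intro c h
  rcases zmod4_aux3' c h with h' | h' <;> subst h'
  · exact dvd_zero 2
  · exact ⟨1, by decide⟩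
lemma zmod4_surj : Function.Surjective (ZMod.castHom (show 2 ∣ 4 by norm_num) (ZMod 2)) := by decide

lemma polyA (P : (ZMod 4)[X]) (h : P.map (ZMod.castHom (show 2 ∣ 4 by norm_num) (ZMod 2)) = 0) :
    C (2 : ZMod 4) * P = 0 := by
  ext i
  rw [coeff_C_mul, coeff_zero]
  refine zmod4_aux1 _ ?_
  have := congrArg (fun p => coeff p i) h
  simpa [coeff_map] using this

lemma polyB (P : (ZMod 4)[X]) (h : C (2 : ZMod 4) * P = 0) :
    P.map (ZMod.castHom (show 2 ∣ 4 by norm_num) (ZMod 2)) = 0 := by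
  ext i
  rw [coeff_map, coeff_zero]
  refine zmod4_aux2 _ ?_
  have := congrArg (fun p => coeff p i) h
  simpa [coeff_C_mul] using this

lemma polyC (P : (ZMod 4)[X]) (h : P.map (ZMod.castHom (show 2 ∣ 4 by norm_num) (ZMod 2)) = 0) :
    ∃ E, P = C (2 : ZMod 4) * E := by
  have : C (2 : ZMod 4) ∣ P := by
    rw [C_dvd_iff_dvd_coeff]
    intro i
    refine zmod4_aux3 _ ?_
    have := congrArg (fun p => coeff p i) h
    simpa [coeff_map] using this
  exact this

lemma polyAB (P Q : (ZMod 4)[X])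
    (h : P.map (ZMod.castHom (show 2 ∣ 4 by norm_num) (ZMod 2)) =
      Q.map (ZMod.castHom (show 2 ∣ 4 by norm_num) (ZMod 2))) :
    C (2 : ZMod 4) * P = C (2 : ZMod 4) * Q := by
  have := polyA (P - Q) (by rw [Polynomial.map_sub, h, sub_self])
  linear_combination this

theorem hensel_lift_exists_unique (m : ℕ) (hm : 1 ≤ m)
    (h₂ : Polynomial (ZMod 2)) (hmonic : h₂.Monic) (hirr : Irreducible h₂)
    (hdeg : h₂.natDegree = m)
    -- primitivity: the root of h₂ has multiplicative order n = 2^m - 1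
    (hord : (AdjoinRoot.root h₂) ^ (2 ^ m - 1) = 1)
    (hprim : ∀ k : ℕ, 0 < k → k < 2 ^ m - 1 → (AdjoinRoot.root h₂) ^ k ≠ 1) :
    ∃! h : Polynomial (ZMod 4), h.Monic ∧ h.natDegree = m ∧
      h.map (ZMod.castHom (show 2 ∣ 4 by norm_num) (ZMod 2)) = h₂ ∧
      h ∣ (X ^ (2 ^ m - 1) - 1) := by
  haveI : Nontrivial (ZMod 4) := ⟨⟨0, 1, by decide⟩⟩
  set ρ := ZMod.castHom (show 2 ∣ 4 by norm_num) (ZMod 2) with hρdef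
  set n := 2 ^ m - 1 with hn
  have h2m : 2 ≤ 2 ^ m := by
    calc 2 = 2 ^ 1 := (pow_one 2).symm
    _ ≤ 2 ^ m := Nat.pow_le_pow_right (by norm_num) hm
  have hn1 : 1 ≤ n := by omega
  -- h₂ divides X^n - 1 over ZMod 2
  have hdvd2 : h₂ ∣ (X ^ n - 1 : (ZMod 2)[X]) := by
    rw [← AdjoinRoot.mk_eq_zero, map_sub, map_pow, AdjoinRoot.mk_X, map_one, hord, sub_self]
  obtain ⟨g₂, hfg⟩ := hdvd2
  -- separability of X^n - 1 over ZMod 2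
  have hder : derivative ((X : (ZMod 2)[X]) ^ n - 1) = X ^ (n - 1) := by
    rw [derivative_sub, derivative_one, sub_zero, derivative_X_pow]
    have hodd : ((n : ℕ) : ZMod 2) = 1 := by
      have hmod : n % 2 = 1 := by
        have h2 : 2 ^ m = 2 * 2 ^ (m - 1) := by
          rw [← pow_succ']
          congr 1
          omega
        omega
      conv_lhs => rw [← Nat.mod_add_div n 2, hmod]
      push_cast
      rw [show (2 : ZMod 2) = 0 from rfl, zero_mul, add_zero]
    rw [hodd, map_one, one_mul]
  have hXpow : (X : (ZMod 2)[X]) * X ^ (n - 1) = X ^ n := by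
    rw [← pow_succ']
    congr 1
    omega
  have hsep : ((X : (ZMod 2)[X]) ^ n - 1).Separable := by
    refine ⟨-1, X, ?_⟩
    rw [hder, hXpow]
    ring
  have hcop : IsCoprime h₂ g₂ := by
    rw [hfg] at hsep
    exact hsep.isCoprime
  obtain ⟨a, b, hab⟩ := id hcop
  -- lifts
  have hmapsurj := Polynomial.map_surjective ρ zmod4_surj
  obtain ⟨H, hH, hHdeg, hHmon⟩ :=
    Polynomial.lifts_and_degree_eq_and_monic ((Polynomial.mem_lifts h₂).mpr (hmapsurj h₂)) hmonic
  obtain ⟨G, hG⟩ := hmapsurj g₂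
  obtain ⟨A, hA⟩ := hmapsurj a
  obtain ⟨B, hB⟩ := hmapsurj b
  have hHnd : H.natDegree = m := by
    rw [← hdeg]
    exact natDegree_eq_of_degree_eq hHdeg
  have hmapXn : ((X ^ n - 1 : (ZMod 4)[X]).map ρ) = (X ^ n - 1 : (ZMod 2)[X]) := by
    rw [Polynomial.map_sub, Polynomial.map_pow, map_X, Polynomial.map_one]
  obtain ⟨E, hE⟩ := polyC (X ^ n - 1 - H * G) (by
    rw [Polynomial.map_sub, hmapXn, Polynomial.map_mul, hH, hG, hfg, sub_self])
  have hPE : (X ^ n - 1 : (ZMod 4)[X]) = H * G + C 2 * E := by linear_combination hE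
  set R := (B * E) %ₘ H with hRdef
  set Q := (B * E) /ₘ H with hQdef
  have hRQ : R + H * Q = B * E := modByMonic_add_div (B * E) H
  set S := A * E + Q * G with hSdef
  set h := H + C (2 : ZMod 4) * R with hh
  set G' := G + C (2 : ZMod 4) * S with hG'def
  have h4 : (C (2 : ZMod 4)) * C 2 = 0 := by
    rw [← C_mul, show (2 * 2 : ZMod 4) = 0 from by decide, C_0]
  -- the key congruence
  have hre : R.map ρ + h₂ * Q.map ρ = b * E.map ρ := by
    have := congrArg (Polynomial.map ρ) hRQ
    simpa [Polynomial.map_add, Polynomial.map_mul, hH, hB] using this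
  have h2eq : C (2 : ZMod 4) * (H * S + R * G) = C 2 * E := by
    refine polyAB _ _ ?_
    have hmap : (H * S + R * G).map ρ =
        h₂ * (a * E.map ρ + Q.map ρ * g₂) + R.map ρ * g₂ := by
      rw [hSdef]
      simp [Polynomial.map_add, Polynomial.map_mul, hH, hG, hA]
    rw [hmap]
    linear_combination E.map ρ * hab + g₂ * hre
  have hexist : h * G' = X ^ n - 1 := by
    rw [hh, hG'def]
    linear_combination h2eq + (R * S) * h4 - hPE
  -- properties of h
  have hdegR : (C (2 : ZMod 4) * R).degree < H.degree := by
    refine lt_of_le_of_lt ?_ (degree_modByMonic_lt (B * E) hHmon)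
    calc (C (2 : ZMod 4) * R).degree ≤ (C (2 : ZMod 4)).degree + R.degree := degree_mul_le _ _
    _ ≤ 0 + R.degree := add_le_add degree_C_le le_rfl
    _ = R.degree := zero_add _
  have hhmon : h.Monic := hHmon.add_of_left hdegR
  have hhdeg : h.natDegree = m := by
    rw [← hHnd, hh]
    exact natDegree_eq_of_degree_eq (degree_add_eq_left_of_degree_lt hdegR)
  have hρ2 : ρ (2 : ZMod 4) = 0 := by decide
  have hhmap : h.map ρ = h₂ := by
    rw [hh, Polynomial.map_add, Polynomial.map_mul, map_C, hρ2, C_0, zero_mul, add_zero, hH]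
  have hG'map : G'.map ρ = g₂ := by
    rw [hG'def, Polynomial.map_add, Polynomial.map_mul, map_C, hρ2, C_0, zero_mul, add_zero, hG]
  refine ⟨h, ⟨hhmon, hhdeg, hhmap, ⟨G', hexist.symm⟩⟩, ?_⟩
  rintro h' ⟨h'mon, h'deg, h'map, c, hc⟩
  -- uniqueness
  have hcmap : c.map ρ = g₂ := by
    have hmc := congrArg (Polynomial.map ρ) hc
    rw [hmapXn, Polynomial.map_mul, h'map, hfg] at hmc
    exact (mul_left_cancel₀ hmonic.ne_zero hmc).symm
  obtain ⟨D₀, hD₀⟩ := polyC (h' - h) (by rw [Polynomial.map_sub, h'map, hhmap, sub_self])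
  obtain ⟨E₀, hE₀⟩ := polyC (c - G') (by rw [Polynomial.map_sub, hcmap, hG'map, sub_self])
  have hD : h' = h + C (2 : ZMod 4) * D₀ := by linear_combination hD₀
  have hcG : c = G' + C (2 : ZMod 4) * E₀ := by linear_combination hE₀
  have hz : C (2 : ZMod 4) * (h * E₀ + D₀ * G') = 0 := by
    rw [hD, hcG] at hc
    linear_combination -hexist - hc - D₀ * E₀ * h4
  have hz2 : (h * E₀ + D₀ * G').map ρ = 0 := polyB _ hz
  have hz3 : h₂ * E₀.map ρ + D₀.map ρ * g₂ = 0 := by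
    rw [Polynomial.map_add, Polynomial.map_mul, Polynomial.map_mul, hhmap, hG'map] at hz2
    exact hz2
  have hdvdd : h₂ ∣ D₀.map ρ * g₂ := ⟨-(E₀.map ρ), by linear_combination hz3⟩
  have hdvd0 : h₂ ∣ D₀.map ρ := hcop.dvd_of_dvd_mul_right hdvdd
  have hDcoeff : ∀ i, m ≤ i → (h' - h).coeff i = 0 := by
    intro i hi
    rw [coeff_sub]
    rcases eq_or_lt_of_le hi with rfl | hlt
    · rw [show h'.coeff m = 1 by rw [← h'deg]; exact h'mon.coeff_natDegree,
        show h.coeff m = 1 by rw [← hhdeg]; exact hhmon.coeff_natDegree, sub_self]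
    · rw [coeff_eq_zero_of_natDegree_lt (by rw [h'deg]; exact hlt),
        coeff_eq_zero_of_natDegree_lt (by rw [hhdeg]; exact hlt), sub_self]
  have hd0deg : (D₀.map ρ).degree < h₂.degree := by
    have h1 : h₂.degree = (m : WithBot ℕ) := by
      rw [degree_eq_natDegree hmonic.ne_zero, hdeg]
    rw [h1]
    refine (degree_lt_iff_coeff_zero _ m).mpr ?_
    intro i hi
    rw [coeff_map]
    refine zmod4_aux2 _ ?_
    have hci := congrArg (fun p => coeff p i) hD₀
    simp only [coeff_C_mul] at hci
    rw [← hci]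
    exact hDcoeff i hi
  have hd00 : D₀.map ρ = 0 := eq_zero_of_dvd_of_degree_lt hdvd0 hd0deg
  have hfin : C (2 : ZMod 4) * D₀ = 0 := polyA _ hd00
  rw [hD, hfin, add_zero]
end

section
/- The octacode, defined as the extended cyclic code over Z/4Z of length 8 obtained from the cyclic code of length 7 generated by h(X) = X³ + 3X² + 2X + 3 by appending an overall parity check (so that every codeword's coordinates sum to 0 mod 4), is self-dual: D = D⊥ with respect to the inner product a·b = Σ aᵢbᵢ mod 4. -/
open Polynomial

/-- The extended cyclic code of length `n+1` over `Z/4Z`: the cyclic code of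
length `n` generated by `g` (the multiples of `g` in `(Z/4Z)[X]/(Xⁿ-1)`),
extended by an overall parity check (the last coordinate is the negative of
the sum of the first `n`). -/
def extendedCyclic (n : ℕ) (g : Polynomial (ZMod 4)) : Set (Fin (n + 1) → ZMod 4) :=
  { c | (∃ q : Polynomial (ZMod 4),
          ∀ i : Fin n, c i.castSucc = ((q * g) %ₘ (X ^ n - 1)).coeff i) ∧
        c (Fin.last n) = -(∑ i : Fin n, c i.castSucc) }

/-- Generator matrix of the octacode. -/
def Grow : Fin 4 → Fin 8 → ZMod 4 :=
  ![![3,2,3,1,0,0,0,3], ![0,3,2,3,1,0,0,3], ![0,0,3,2,3,1,0,3], ![0,0,0,3,2,3,1,3]]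

instance : Nontrivial (ZMod 4) := ⟨⟨0, 1, by decide⟩⟩

lemma h4Z : (4 : ZMod 4) = 0 := by decide

lemma h4P : (4 : Polynomial (ZMod 4)) = 0 := by
  rw [show (4 : Polynomial (ZMod 4)) = C (4:ZMod 4) from (map_ofNat C 4).symm]
  rw [show (4:ZMod 4) = 0 by decide, map_zero]

lemma monic_f : (X^4+X^3+3*X^2+2*X+1 : Polynomial (ZMod 4)).Monic := by
  rw [show (X^4+X^3+3*X^2+2*X+1 : Polynomial (ZMod 4))
      = X^4 + (X^3+3*X^2+2*X+1) by ring]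
  exact monic_X_pow_add (lt_of_le_of_lt (by compute_degree : degree _ ≤ 3) (by norm_num))

lemma monic_p : (X^7 - 1 : Polynomial (ZMod 4)).Monic :=
  monic_X_pow_sub (lt_of_le_of_lt degree_one_le (by norm_num))

lemma fact_p : (X^7 - 1 : Polynomial (ZMod 4))
    = (X^4+X^3+3*X^2+2*X+1) * (X^3+3*X^2+2*X+3) := by
  linear_combination (-1 - 2*X - 4*X^2 - 4*X^3 - 4*X^4 - 2*X^5 - X^6) * h4P

lemma deg_f : (X^4+X^3+3*X^2+2*X+1 : Polynomial (ZMod 4)).degree = 4 := by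
  compute_degree!

/-- Reduction of the product modulo `X^7-1`. -/
lemma key_mod (q : Polynomial (ZMod 4)) :
    (q * (X^3+3*X^2+2*X+3)) %ₘ (X^7 - 1)
      = (q %ₘ (X^4+X^3+3*X^2+2*X+1)) * (X^3+3*X^2+2*X+3) := by
  set f : Polynomial (ZMod 4) := X^4+X^3+3*X^2+2*X+1 with hf
  set g : Polynomial (ZMod 4) := X^3+3*X^2+2*X+3 with hg
  have hq' : q %ₘ f + f * (q /ₘ f) = q := modByMonic_add_div q f
  have hsplit : q * g = (q %ₘ f) * g + (X^7 - 1) * (q /ₘ f) := by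
    rw [fact_p]
    conv_lhs => rw [← hq']
    ring
  rw [hsplit, add_modByMonic, self_mul_modByMonic monic_p, add_zero]
  rw [modByMonic_eq_self_iff monic_p]
  have h1 : (q %ₘ f).degree < ((4 : ℕ) : WithBot ℕ) := by
    have h := degree_modByMonic_lt q monic_f
    rwa [deg_f] at h
  have h2 : (g : Polynomial (ZMod 4)).degree ≤ 3 := by rw [hg]; compute_degree
  have h3 : (q %ₘ f).degree ≤ 3 := by
    exact Order.le_of_lt_succ (by exact_mod_cast h1)
  have h4 : (X^7 - 1 : Polynomial (ZMod 4)).degree = 7 := by compute_degree!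
  rw [h4]
  calc ((q %ₘ f) * g).degree ≤ (q %ₘ f).degree + g.degree := degree_mul_le _ _
    _ ≤ (3:ℕ) + (3:ℕ) := add_le_add h3 h2
    _ < (7:ℕ) := by norm_num

lemma prod_expand (a : Fin 4 → ZMod 4) :
    ((C (a 0) + C (a 1)*X + C (a 2)*X^2 + C (a 3)*X^3) * (X^3+3*X^2+2*X+3) : Polynomial (ZMod 4))
      = C (a 0*3) + C (a 0*2+a 1*3) * X + C (a 0*3+a 1*2+a 2*3) * X^2
        + C (a 0+a 1*3+a 2*2+a 3*3) * X^3
        + C (a 1+a 2*3+a 3*2) * X^4 + C (a 2+a 3*3) * X^5 + C (a 3) * X^6 := by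
  simp only [map_add, map_mul, map_ofNat, map_one]
  ring

lemma coeff_prod (a : Fin 4 → ZMod 4) (i : Fin 7) :
    ((C (a 0) + C (a 1)*X + C (a 2)*X^2 + C (a 3)*X^3) * (X^3+3*X^2+2*X+3)
        : Polynomial (ZMod 4)).coeff (i : ℕ)
      = ∑ j, a j * Grow j i.castSucc := by
  rw [prod_expand]
  fin_cases i <;>
    · rw [Fin.sum_univ_four]
      simp only [coeff_add, coeff_C_mul, coeff_X_pow, coeff_C, coeff_X]
      norm_num [Grow, Matrix.vecHead, Matrix.vecTail, Matrix.cons_val_two, Matrix.cons_val_three]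
      try ring

lemma sum_rows : ∀ j : Fin 4, -(∑ i : Fin 7, Grow j i.castSucc) = Grow j (Fin.last 7) := by
  decide

lemma parity_fact (a : Fin 4 → ZMod 4) :
    -(∑ i : Fin 7, ∑ j, a j * Grow j i.castSucc) = ∑ j, a j * Grow j (Fin.last 7) := by
  calc -(∑ i : Fin 7, ∑ j, a j * Grow j i.castSucc)
      = -(∑ j, a j * ∑ i : Fin 7, Grow j i.castSucc) := by
        rw [Finset.sum_comm]; simp_rw [Finset.mul_sum]
    _ = ∑ j, a j * -(∑ i : Fin 7, Grow j i.castSucc) := by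
        simp [Finset.mul_sum, mul_neg]
    _ = ∑ j, a j * Grow j (Fin.last 7) := by simp_rw [sum_rows]

lemma mem_octa_iff (c : Fin 8 → ZMod 4) :
    c ∈ extendedCyclic 7 (X ^ 3 + 3 * X ^ 2 + 2 * X + 3) ↔
      ∃ a : Fin 4 → ZMod 4, ∀ i, c i = ∑ j, a j * Grow j i := by
  constructor
  · rintro ⟨⟨q, hq⟩, hlast⟩
    set t : Polynomial (ZMod 4) := q %ₘ (X^4+X^3+3*X^2+2*X+1) with ht
    refine ⟨![t.coeff 0, t.coeff 1, t.coeff 2, t.coeff 3], ?_⟩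
    have hdeg : t.natDegree < 4 := by
      by_cases h0 : t = 0
      · simp [h0]
      · refine (natDegree_lt_iff_degree_lt h0).2 ?_
        have h := degree_modByMonic_lt q monic_f
        rwa [deg_f] at h
    have hexp : t = C (t.coeff 0) + C (t.coeff 1)*X + C (t.coeff 2)*X^2 + C (t.coeff 3)*X^3 := by
      conv_lhs => rw [t.as_sum_range' 4 hdeg]
      simp [Finset.sum_range_succ, ← C_mul_X_pow_eq_monomial]
    have hcast : ∀ i : Fin 7, c i.castSucc
        = ∑ j, ![t.coeff 0, t.coeff 1, t.coeff 2, t.coeff 3] j * Grow j i.castSucc := by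
      intro i
      rw [hq i, key_mod q, ← ht]
      conv_lhs => rw [hexp]
      exact coeff_prod ![t.coeff 0, t.coeff 1, t.coeff 2, t.coeff 3] i
    intro i
    refine Fin.lastCases ?_ (fun i => hcast i) i
    rw [hlast]
    calc -(∑ i : Fin 7, c i.castSucc)
        = -(∑ i : Fin 7, ∑ j, ![t.coeff 0, t.coeff 1, t.coeff 2, t.coeff 3] j * Grow j i.castSucc) := by
          rw [Finset.sum_congr rfl fun i _ => hcast i]
      _ = _ := parity_fact _
  · rintro ⟨a, ha⟩
    refine ⟨⟨C (a 0) + C (a 1)*X + C (a 2)*X^2 + C (a 3)*X^3, ?_⟩, ?_⟩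
    · intro i
      have hqdeg : (C (a 0) + C (a 1)*X + C (a 2)*X^2 + C (a 3)*X^3
          : Polynomial (ZMod 4)).degree < (X^4+X^3+3*X^2+2*X+1 : Polynomial (ZMod 4)).degree := by
        rw [deg_f]
        have : (C (a 0) + C (a 1)*X + C (a 2)*X^2 + C (a 3)*X^3
            : Polynomial (ZMod 4)).degree ≤ 3 := by compute_degree
        exact lt_of_le_of_lt this (by norm_num)
      rw [key_mod, (modByMonic_eq_self_iff monic_f).2 hqdeg, coeff_prod a i, ha i.castSucc]
    · rw [ha (Fin.last 7)]
      rw [Finset.sum_congr rfl fun (i : Fin 7) _ => ha i.castSucc]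
      exact (parity_fact a).symm

lemma rows_orth : ∀ j k : Fin 4, ∑ i : Fin 8, Grow j i * Grow k i = 0 := by decide

lemma inner_zero (u v : Fin 4 → ZMod 4) :
    ∑ i : Fin 8, (∑ j, u j * Grow j i) * (∑ k, v k * Grow k i) = 0 := by
  calc ∑ i : Fin 8, (∑ j, u j * Grow j i) * (∑ k, v k * Grow k i)
      = ∑ i : Fin 8, ∑ j, ∑ k, (u j * v k) * (Grow j i * Grow k i) := by
        refine Finset.sum_congr rfl fun i _ => ?_
        rw [Finset.sum_mul_sum]
        exact Finset.sum_congr rfl fun j _ => Finset.sum_congr rfl fun k _ => by ring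
    _ = ∑ j, ∑ i : Fin 8, ∑ k, (u j * v k) * (Grow j i * Grow k i) := Finset.sum_comm
    _ = ∑ j, ∑ k, ∑ i : Fin 8, (u j * v k) * (Grow j i * Grow k i) := by
        exact Finset.sum_congr rfl fun j _ => Finset.sum_comm
    _ = ∑ j, ∑ k, (u j * v k) * ∑ i : Fin 8, Grow j i * Grow k i := by
        simp_rw [Finset.mul_sum]
    _ = 0 := by simp [rows_orth]

theorem octacode_self_dual :
    extendedCyclic 7 (X ^ 3 + 3 * X ^ 2 + 2 * X + 3) =
      dualSet (extendedCyclic 7 (X ^ 3 + 3 * X ^ 2 + 2 * X + 3)) := by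
  ext x
  constructor
  · intro hx
    obtain ⟨v, hv⟩ := (mem_octa_iff x).1 hx
    intro a ha
    obtain ⟨u, hu⟩ := (mem_octa_iff a).1 ha
    calc ∑ i, a i * x i = ∑ i : Fin 8, (∑ j, u j * Grow j i) * (∑ k, v k * Grow k i) := by
          exact Finset.sum_congr rfl fun i _ => by rw [hu i, hv i]
      _ = 0 := inner_zero u v
  · intro hx
    have hrow : ∀ j : Fin 4, (Grow j) ∈ extendedCyclic 7 (X ^ 3 + 3 * X ^ 2 + 2 * X + 3) := by
      intro j
      refine (mem_octa_iff (Grow j)).2 ⟨fun k => if k = j then 1 else 0, fun i => ?_⟩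
      simp [Finset.sum_ite_eq]
    have hj : ∀ j : Fin 4, ∑ i : Fin 8, Grow j i * x i = 0 := fun j => hx (Grow j) (hrow j)
    have h0 : 3*x 0 + 2*x 1 + 3*x 2 + x 3 + 3*x 7 = 0 := by
      have h := hj 0
      rw [Fin.sum_univ_eight] at h
      rw [show Grow 0 0 = 3 from by decide, show Grow 0 1 = 2 from by decide, show Grow 0 2 = 3 from by decide, show Grow 0 3 = 1 from by decide, show Grow 0 4 = 0 from by decide, show Grow 0 5 = 0 from by decide, show Grow 0 6 = 0 from by decide, show Grow 0 7 = 3 from by decide] at h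
      linear_combination h
    have h1 : 3*x 1 + 2*x 2 + 3*x 3 + x 4 + 3*x 7 = 0 := by
      have h := hj 1
      rw [Fin.sum_univ_eight] at h
      rw [show Grow 1 0 = 0 from by decide, show Grow 1 1 = 3 from by decide, show Grow 1 2 = 2 from by decide, show Grow 1 3 = 3 from by decide, show Grow 1 4 = 1 from by decide, show Grow 1 5 = 0 from by decide, show Grow 1 6 = 0 from by decide, show Grow 1 7 = 3 from by decide] at h
      linear_combination h
    have h2 : 3*x 2 + 2*x 3 + 3*x 4 + x 5 + 3*x 7 = 0 := by
      have h := hj 2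
      rw [Fin.sum_univ_eight] at h
      rw [show Grow 2 0 = 0 from by decide, show Grow 2 1 = 0 from by decide, show Grow 2 2 = 3 from by decide, show Grow 2 3 = 2 from by decide, show Grow 2 4 = 3 from by decide, show Grow 2 5 = 1 from by decide, show Grow 2 6 = 0 from by decide, show Grow 2 7 = 3 from by decide] at h
      linear_combination h
    have h3 : 3*x 3 + 2*x 4 + 3*x 5 + x 6 + 3*x 7 = 0 := by
      have h := hj 3
      rw [Fin.sum_univ_eight] at h
      rw [show Grow 3 0 = 0 from by decide, show Grow 3 1 = 0 from by decide, show Grow 3 2 = 0 from by decide, show Grow 3 3 = 3 from by decide, show Grow 3 4 = 2 from by decide, show Grow 3 5 = 3 from by decide, show Grow 3 6 = 1 from by decide, show Grow 3 7 = 3 from by decide] at h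
      linear_combination h
    set w : Fin 4 → ZMod 4 := ![3*x 0, 2*x 0+3*x 1, x 0+2*x 1+3*x 2, 3*x 0+x 1+2*x 2+3*x 3]
      with hw
    have hcoord : ∀ k : Fin 8, ∑ j, w j * Grow j k
        = w 0 * Grow 0 k + w 1 * Grow 1 k + w 2 * Grow 2 k + w 3 * Grow 3 k := by
      intro k; rw [Fin.sum_univ_four]
    have g0 : x 0 = ∑ j, w j * Grow j 0 := by
      rw [hcoord 0, show Grow 0 0 = 3 from by decide, show Grow 1 0 = 0 from by decide, show Grow 2 0 = 0 from by decide, show Grow 3 0 = 0 from by decide, hw]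
      norm_num [Matrix.vecHead, Matrix.vecTail]
      linear_combination (-2*x 0) * h4Z
    have g1 : x 1 = ∑ j, w j * Grow j 1 := by
      rw [hcoord 1, show Grow 0 1 = 2 from by decide, show Grow 1 1 = 3 from by decide, show Grow 2 1 = 0 from by decide, show Grow 3 1 = 0 from by decide, hw]
      norm_num [Matrix.vecHead, Matrix.vecTail]
      linear_combination (-3*x 0 - 2*x 1) * h4Z
    have g2 : x 2 = ∑ j, w j * Grow j 2 := by
      rw [hcoord 2, show Grow 0 2 = 3 from by decide, show Grow 1 2 = 2 from by decide, show Grow 2 2 = 3 from by decide, show Grow 3 2 = 0 from by decide, hw]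
      norm_num [Matrix.vecHead, Matrix.vecTail, Matrix.cons_val_two, Matrix.cons_val_three]
      linear_combination (-4*x 0 - 3*x 1 - 2*x 2) * h4Z
    have g3 : x 3 = ∑ j, w j * Grow j 3 := by
      rw [hcoord 3, show Grow 0 3 = 1 from by decide, show Grow 1 3 = 3 from by decide, show Grow 2 3 = 2 from by decide, show Grow 3 3 = 3 from by decide, hw]
      norm_num [Matrix.vecHead, Matrix.vecTail, Matrix.cons_val_two, Matrix.cons_val_three]
      linear_combination (-5*x 0 - 4*x 1 - 3*x 2 - 2*x 3) * h4Z
    have g4 : x 4 = ∑ j, w j * Grow j 4 := by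
      rw [hcoord 4, show Grow 0 4 = 0 from by decide, show Grow 1 4 = 1 from by decide, show Grow 2 4 = 3 from by decide, show Grow 3 4 = 2 from by decide, hw]
      norm_num [Matrix.vecHead, Matrix.vecTail, Matrix.cons_val_two, Matrix.cons_val_three]
      linear_combination 3*h0 + h1 + (-5*x 0 - 5*x 1 - 6*x 2 - 3*x 3 - 3*x 7) * h4Z
    have g5 : x 5 = ∑ j, w j * Grow j 5 := by
      rw [hcoord 5, show Grow 0 5 = 0 from by decide, show Grow 1 5 = 0 from by decide, show Grow 2 5 = 1 from by decide, show Grow 3 5 = 3 from by decide, hw]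
      norm_num [Matrix.vecHead, Matrix.vecTail, Matrix.cons_val_two, Matrix.cons_val_three]
      linear_combination 2*h0 + h1 + h2 + (-4*x 0 - 3*x 1 - 5*x 2 - 4*x 3 - x 4 - 3*x 7) * h4Z
    have g6 : x 6 = ∑ j, w j * Grow j 6 := by
      rw [hcoord 6, show Grow 0 6 = 0 from by decide, show Grow 1 6 = 0 from by decide, show Grow 2 6 = 0 from by decide, show Grow 3 6 = 1 from by decide, hw]
      norm_num [Matrix.vecHead, Matrix.vecTail, Matrix.cons_val_two, Matrix.cons_val_three]
      linear_combination 3*h0 + 3*h1 + h2 + h3 + (-3*x 0 - 4*x 1 - 5*x 2 - 5*x 3 - 2*x 4 - x 5 - 6*x 7) * h4Z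
    have g7 : x 7 = ∑ j, w j * Grow j 7 := by
      rw [hcoord 7, show Grow 0 7 = 3 from by decide, show Grow 1 7 = 3 from by decide, show Grow 2 7 = 3 from by decide, show Grow 3 7 = 3 from by decide, hw]
      norm_num [Matrix.vecHead, Matrix.vecTail, Matrix.cons_val_two, Matrix.cons_val_three]
      linear_combination 3*h0 + (-9*x 0 - 6*x 1 - 6*x 2 - 3*x 3 - 2*x 7) * h4Z
    refine (mem_octa_iff x).2 ⟨w, ?_⟩
    intro i
    fin_cases i
    · exact g0
    · exact g1
    · exact g2
    · exact g3
    · exact g4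
    · exact g5
    · exact g6
    · exact g7
end
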